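/- For a regular groupoid action, the convolution product on A[G] is well defined: if f = Σ a_t·t and g = Σ b_u·u with a_t ∈ D(β_{t⁻¹}) and b_u ∈ D(β_{u⁻¹}), then each coefficient Σ_{(t⁻¹,s) ∈ G^(2)} a_t β_t(b_{t⁻¹s}) of the product fg lies in D(β_{s⁻¹}), and the involution f* = Σ_t β_t(a*_{t⁻¹})·t satisfies the coefficient condition β_t(a*_{t⁻¹}) ∈ D(β_{t⁻¹}). -/

import Mathlib

/-- An algebraic (object-free) presentation of a small category: a set `M` of
morphisms with source and target maps `src, tgt : M → M` (whose common image
is the set of identity morphisms, playing the role of objects) and a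
composition `comp`, which is only required to behave well on composable pairs
(`src f = tgt g`). -/
structure SmallCat (M : Type*) where
  src : M → M
  tgt : M → M
  comp : M → M → M
  src_src : ∀ f, src (src f) = src f
  tgt_src : ∀ f, tgt (src f) = src f
  src_tgt : ∀ f, src (tgt f) = tgt f
  tgt_tgt : ∀ f, tgt (tgt f) = tgt f
  src_comp : ∀ f g, src f = tgt g → src (comp f g) = src g
  tgt_comp : ∀ f g, src f = tgt g → tgt (comp f g) = tgt f
  comp_assoc : ∀ f g k, src f = tgt g → src g = tgt k →
    comp (comp f g) k = comp f (comp g k)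
  id_comp : ∀ f, comp (tgt f) f = f
  comp_id : ∀ f, comp f (src f) = f

/-- A groupoid: a small category in which every morphism is invertible. -/
structure GroupoidAlg (M : Type*) extends SmallCat M where
  inv : M → M
  src_inv : ∀ f, src (inv f) = tgt f
  tgt_inv : ∀ f, tgt (inv f) = src f
  comp_inv : ∀ f, comp f (inv f) = tgt f
  inv_comp : ∀ f, comp (inv f) f = src f

variable {Γ : Type*} (A : Type*) [NonUnitalNormedRing A] [StarRing A]
  [NormedSpace ℂ A] [IsScalarTower ℂ A A] [SMulCommClass ℂ A A] [StarModule ℂ A]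

/-- A quasi action of a discrete groupoid `G` on a C*-algebra `A`: each `g`
is assigned a *-homomorphism `β g : A → A` together with a closed
*-subalgebra `D g ⊆ A` on which `β g` restricts to a *-isomorphism onto
`β g (A)`, such that for composable `(s,t)` one has `β t (A) = D s`,
`D (st) = D t` and `β (st) = β s ∘ β t`, while `β s ∘ β t = 0` for
non-composable `(s,t)`. -/
structure QuasiAction (G : GroupoidAlg Γ) where
  β : Γ → A →⋆ₙₐ[ℂ] A
  D : Γ → NonUnitalStarSubalgebra ℂ A
  closedD : ∀ g, IsClosed (D g : Set A)
  injD : ∀ g, Set.InjOn (β g) (D g)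
  rangeD : ∀ g a, ∃ d ∈ D g, β g a = β g d
  range_eq : ∀ s t, G.src s = G.tgt t → Set.range (β t) = (D s : Set A)
  dom_comp : ∀ s t, G.src s = G.tgt t → D (G.comp s t) = D t
  map_comp : ∀ s t, G.src s = G.tgt t → ∀ a, β (G.comp s t) a = β s (β t a)
  zero_ncomp : ∀ s t, G.src s ≠ G.tgt t → ∀ a, β s (β t a) = 0

open Classical

/-- The coefficient at `s` of the convolution product `fg` in `A[G]`:
`Σ_{(t⁻¹,s) ∈ G⁽²⁾} a_t · β_t(b_{t⁻¹ s})`. -/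
noncomputable def convCoef {Γ : Type*} {A : Type*} [NonUnitalNormedRing A] [StarRing A]
    [NormedSpace ℂ A] [IsScalarTower ℂ A A] [SMulCommClass ℂ A A] [StarModule ℂ A]
    {G : GroupoidAlg Γ} (Q : QuasiAction A G) (a b : Γ → A) (s : Γ) : A :=
  ∑ᶠ t, if G.src (G.inv t) = G.tgt s then a t * Q.β t (b (G.comp (G.inv t) s)) else 0

/-- The coefficient at `t` of the involution `f* = Σ_t β_t(a*_{t⁻¹})·t`. -/
noncomputable def involCoef {Γ : Type*} {A : Type*} [NonUnitalNormedRing A] [StarRing A]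
    [NormedSpace ℂ A] [IsScalarTower ℂ A A] [SMulCommClass ℂ A A] [StarModule ℂ A]
    {G : GroupoidAlg Γ} (Q : QuasiAction A G) (a : Γ → A) (t : Γ) : A :=
  Q.β t (star (a (G.inv t)))

/-! Since `t` and `t⁻¹` are composable, `β_t` has range `D(β_{t⁻¹})`. If `(t⁻¹, s)` is composable,
then `t` and `s` have the same target, so `D(β_{t⁻¹}) = range β_t = D(β_{s⁻¹})`: both factors of
the summand `a_t β_t(b_{t⁻¹s})` lie in the subalgebra `D(β_{s⁻¹})`. -/

theorem AddSubmonoidClass.finsum_mem {ι M S : Type*} [AddCommMonoid M] [SetLike S M]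
    [AddSubmonoidClass S M] (s : S) {f : ι → M} (h : ∀ i, f i ∈ s) : ∑ᶠ i, f i ∈ s :=
  finsum_induction (· ∈ s) (zero_mem s) (fun _ _ => add_mem) h

namespace QuasiAction

variable {B : Type*} [NonUnitalNormedRing B] [StarRing B] [NormedSpace ℂ B] {G : GroupoidAlg Γ}
  (Q : QuasiAction B G)

theorem range_β (t : Γ) : Set.range (Q.β t) = Q.D (G.inv t) :=
  Q.range_eq (G.inv t) t (G.src_inv t)

theorem β_mem_D (t : Γ) (x : B) : Q.β t x ∈ Q.D (G.inv t) := by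
  rw [← SetLike.mem_coe, ← Q.range_β]
  exact Set.mem_range_self x

theorem D_inv_eq_of_tgt_eq {s t : Γ} (h : G.tgt t = G.tgt s) : Q.D (G.inv t) = Q.D (G.inv s) :=
  SetLike.coe_injective <| (Q.range_β t).symm.trans (Q.range_eq (G.inv s) t (by rw [G.src_inv, h]))

theorem mul_β_mem_D {s t : Γ} (h : G.src (G.inv t) = G.tgt s) {x : B}
    (hx : x ∈ Q.D (G.inv t)) (y : B) : x * Q.β t y ∈ Q.D (G.inv s) := by
  rw [← Q.D_inv_eq_of_tgt_eq (G.src_inv t ▸ h)]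
  exact mul_mem hx (Q.β_mem_D t y)

theorem convCoef_mem_D [IsScalarTower ℂ B B] [SMulCommClass ℂ B B] [StarModule ℂ B]
    (a b : Γ → B) (hda : ∀ t, a t ∈ Q.D (G.inv t)) (s : Γ) :
    convCoef Q a b s ∈ Q.D (G.inv s) :=
  AddSubmonoidClass.finsum_mem _ fun t => by
    split_ifs with h
    exacts [Q.mul_β_mem_D h (hda t) _, zero_mem _]

theorem involCoef_mem_D [IsScalarTower ℂ B B] [SMulCommClass ℂ B B] [StarModule ℂ B]
    (a : Γ → B) (t : Γ) : involCoef Q a t ∈ Q.D (G.inv t) :=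
  Q.β_mem_D t _

end QuasiAction

theorem stmt12_general {Γ : Type*} {A : Type*} [NonUnitalNormedRing A] [StarRing A]
    [NormedSpace ℂ A] [IsScalarTower ℂ A A] [SMulCommClass ℂ A A] [StarModule ℂ A]
    {G : GroupoidAlg Γ} (Q : QuasiAction A G) (a b : Γ → A)
    (hda : ∀ t, a t ∈ Q.D (G.inv t)) :
    (∀ s t, G.src (G.inv t) = G.tgt s →
      a t * Q.β t (b (G.comp (G.inv t) s)) ∈ Q.D (G.inv s)) ∧
    (∀ s, convCoef Q a b s ∈ Q.D (G.inv s)) ∧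
    (∀ t, involCoef Q a t ∈ Q.D (G.inv t)) := by
  exact ⟨fun _ t h => Q.mul_β_mem_D h (hda t) _, Q.convCoef_mem_D a b hda, Q.involCoef_mem_D a⟩

/-- The convolution product and involution on `A[G]` are well defined: if
`f = Σ a_t·t` and `g = Σ b_u·u` are finitely supported with
`a_t ∈ D(β_{t⁻¹})` and `b_u ∈ D(β_{u⁻¹})`, then every coefficient
`Σ_{(t⁻¹,s)∈G⁽²⁾} a_t β_t(b_{t⁻¹s})` of `fg` lies in `D(β_{s⁻¹})` (indeed
each summand does), and every coefficient `β_t(a*_{t⁻¹})` of `f*` lies in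
`D(β_{t⁻¹})`. -/
theorem stmt12 {Γ : Type*} {A : Type*} [NonUnitalNormedRing A] [StarRing A]
    [NormedSpace ℂ A] [IsScalarTower ℂ A A] [SMulCommClass ℂ A A] [StarModule ℂ A]
    {G : GroupoidAlg Γ} (Q : QuasiAction A G) (a b : Γ → A)
    (ha : (Function.support a).Finite) (hb : (Function.support b).Finite)
    (hda : ∀ t, a t ∈ Q.D (G.inv t)) (hdb : ∀ t, b t ∈ Q.D (G.inv t)) :
    (∀ s t, G.src (G.inv t) = G.tgt s →
      a t * Q.β t (b (G.comp (G.inv t) s)) ∈ Q.D (G.inv s)) ∧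
    (∀ s, convCoef Q a b s ∈ Q.D (G.inv s)) ∧
    (∀ t, involCoef Q a t ∈ Q.D (G.inv t)) :=
  stmt12_general Q a b hda
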